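/- In the polynomial ring k[s,t], for any 1 ≤ r ≤ e−1, the degree-r graded component of R (under the grading where a monomial s^u t^v with d | u+v has degree (u+v)/d) consists of all monomials s^u t^{rd−u} with 0 ≤ u ≤ rd except exactly the r monomials t^{rd}, s t^{rd−1}, ..., s^{r−1} t^{rd−r+1}; in particular its dimension is rd + 1 − r. -/

import Mathlib

/-!
Every generator of `R` is a monomial `s^u t^v` with either `u + v ≤ d u` (the degree-`d`
generators, where `u ≥ 1`) or `u + v ≥ d e`, and the exponents satisfying one of these two
conditions form an additive monoid. Hence a monomial of `R` of degree `r d < d e` has `u ≥ r`.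
Conversely, for `r ≤ u ≤ r d` the monomial `s^u t^{rd-u}` is a product of `r` degree-`d`
generators `s^a t^{d-a}` with `a ≥ 1`. So the degree-`r` part of `R` has these monomials as a basis.
-/

open MvPolynomial

/-- Generators of the coordinate ring `R` of the weighted rational curve of type `(d,e)`. -/
noncomputable def wrcGens8 (k : Type*) [Field k] (d e : ℕ) : Set (MvPolynomial (Fin 2) k) :=
  ((fun i => X 0 ^ (d - i) * X 1 ^ i) '' Set.Iic (d - 1)) ∪
  ((fun j => X 0 ^ (e - 1 - j) * X 1 ^ (d * e - (e - 1) + j)) '' Set.Iic (e - 1))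

open Finsupp

namespace MvPolynomial

section RestrictSupport

variable {σ : Type*} (R : Type*) [CommSemiring R]

noncomputable def restrictSupportSubalgebra (M : AddSubmonoid (σ →₀ ℕ)) :
    Subalgebra R (MvPolynomial σ R) :=
  (restrictSupport R (M : Set (σ →₀ ℕ))).toSubalgebra
    ((monomial_mem_restrictSupport R).mpr (Or.inl M.zero_mem))
    fun x y hx hy => by
      have hxy := Submodule.mul_mem_mul hx hy
      rwa [← restrictSupport_add, AddSubmonoid.coe_add_self_eq] at hxy

lemma finrank_restrictSupport [StrongRankCondition R] (s : Set (σ →₀ ℕ)) :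
    Module.finrank R (restrictSupport R s) = s.ncard := by
  rw [Module.finrank_eq_nat_card_basis (basisRestrictSupport R s), Nat.card_coe_set_eq]

end RestrictSupport

lemma monomial_single_zero_add_single_one {R : Type*} [CommSemiring R] (u v : ℕ) :
    (monomial (single 0 u + single 1 v) 1 : MvPolynomial (Fin 2) R) = X 0 ^ u * X 1 ^ v := by
  rw [X_pow_eq_monomial, X_pow_eq_monomial, monomial_mul, one_mul]

lemma X_zero_pow_mul_X_one_pow_mem_restrictSupportSubalgebra_iff {R : Type*} [CommSemiring R]
    [Nontrivial R] {M : AddSubmonoid (Fin 2 →₀ ℕ)} {u v : ℕ} :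
    (X 0 ^ u * X 1 ^ v : MvPolynomial (Fin 2) R) ∈ restrictSupportSubalgebra R M ↔
      single 0 u + single 1 v ∈ M := by
  rw [← monomial_single_zero_add_single_one, ← Subalgebra.mem_toSubmodule]
  exact (monomial_mem_restrictSupport R).trans (or_iff_left one_ne_zero)

end MvPolynomial

namespace Finsupp

lemma degree_fin_two (m : Fin 2 →₀ ℕ) : m.degree = m 0 + m 1 := by
  rw [degree_eq_sum, Fin.sum_univ_two]

lemma degree_single_zero_add_single_one (u v : ℕ) :
    (single 0 u + single 1 v : Fin 2 →₀ ℕ).degree = u + v := by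
  simp

end Finsupp

def wrcExponents (d e : ℕ) : AddSubmonoid (Fin 2 →₀ ℕ) where
  carrier := {m | m.degree ≤ d * m 0 ∨ d * e ≤ m.degree}
  add_mem' := by
    rintro a b (ha | ha) (hb | hb) <;>
      simp only [Set.mem_ofPred_eq, map_add, Finsupp.add_apply, mul_add] <;> omega
  zero_mem' := by simp

lemma mem_wrcExponents {d e : ℕ} {m : Fin 2 →₀ ℕ} :
    m ∈ wrcExponents d e ↔ m.degree ≤ d * m 0 ∨ d * e ≤ m.degree := Iff.rfl

lemma le_of_mem_wrcExponents {d e r : ℕ} {m : Fin 2 →₀ ℕ} (hd : 0 < d) (hre : r < e)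
    (hm : m ∈ wrcExponents d e) (hdeg : m.degree = r * d) : r ≤ m 0 := by
  have hrd : r * d < d * e := by rw [mul_comm d]; exact Nat.mul_lt_mul_of_pos_right hre hd
  rcases hm with hm | hm
  · exact Nat.le_of_mul_le_mul_left (by rw [mul_comm d, ← hdeg]; exact hm) hd
  · omega

section Field

variable {k : Type*} [Field k] {d e : ℕ}

lemma wrcGens8_subset_restrictSupportSubalgebra :
    wrcGens8 k d e ⊆ restrictSupportSubalgebra k (wrcExponents d e) := by
  rintro _ (⟨i, hi, rfl⟩ | ⟨j, hj, rfl⟩) <;>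
    simp only [SetLike.mem_coe, X_zero_pow_mul_X_one_pow_mem_restrictSupportSubalgebra_iff,
      mem_wrcExponents, degree_single_zero_add_single_one, Finsupp.add_apply, single_eq_same,
      single_eq_of_ne (zero_ne_one' (Fin 2))]
  · refine Or.inl ?_
    rw [Set.mem_Iic] at hi
    rcases Nat.eq_zero_or_pos d with rfl | hd
    · simp only [zero_mul]; omega
    · rw [add_zero, Nat.sub_add_cancel (by omega)]
      exact Nat.le_mul_of_pos_right d (by omega)
  · exact Or.inr (by omega)

lemma adjoin_wrcGens8_le_restrictSupportSubalgebra :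
    Algebra.adjoin k (wrcGens8 k d e) ≤ restrictSupportSubalgebra k (wrcExponents d e) :=
  Algebra.adjoin_le wrcGens8_subset_restrictSupportSubalgebra

lemma X_zero_pow_mul_X_one_pow_mem_wrcGens8 {a b : ℕ} (ha : 1 ≤ a) (hab : a + b = d) :
    (X 0 ^ a * X 1 ^ b : MvPolynomial (Fin 2) k) ∈ wrcGens8 k d e :=
  Or.inl ⟨b, Set.mem_Iic.mpr (by omega), by simp only [show d - b = a by omega]⟩

lemma X_zero_pow_mul_X_one_pow_mem_adjoin_wrcGens8 {r : ℕ} (hr : 1 ≤ r) :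
    ∀ {u v : ℕ}, r ≤ u → u + v = r * d →
      (X 0 ^ u * X 1 ^ v : MvPolynomial (Fin 2) k) ∈ Algebra.adjoin k (wrcGens8 k d e) := by
  induction r, hr using Nat.le_induction with
  | base =>
    intro u v hu huv
    exact Algebra.subset_adjoin (X_zero_pow_mul_X_one_pow_mem_wrcGens8 hu (by omega))
  | succ r hr ih =>
    intro u v hu huv
    rw [add_mul, one_mul] at huv
    have hd : 0 < d := Nat.pos_of_ne_zero (by rintro rfl; omega)
    have hrd : r ≤ r * d := Nat.le_mul_of_pos_right r hd
    obtain ⟨a, b, ha, hab, hau, hbv, hr', huv'⟩ : ∃ a b, 1 ≤ a ∧ a + b = d ∧ a ≤ u ∧ b ≤ v ∧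
        r ≤ u - a ∧ u - a + (v - b) = r * d := by
      by_cases hv : d ≤ v + 1
      · refine ⟨1, d - 1, ?_⟩
        omega
      · refine ⟨d - v, v, ?_⟩
        omega
    have hsplit : (X 0 ^ u * X 1 ^ v : MvPolynomial (Fin 2) k) =
        (X 0 ^ a * X 1 ^ b) * (X 0 ^ (u - a) * X 1 ^ (v - b)) := by
      rw [mul_mul_mul_comm, ← pow_add, ← pow_add, Nat.add_sub_cancel' hau,
        Nat.add_sub_cancel' hbv]
    rw [hsplit]
    exact mul_mem (Algebra.subset_adjoin (X_zero_pow_mul_X_one_pow_mem_wrcGens8 ha hab))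
      (ih hr' huv')

lemma X_zero_pow_mul_X_one_pow_mem_adjoin_wrcGens8_iff {r u v : ℕ} (hd : 0 < d) (hr : 1 ≤ r)
    (hre : r < e) (huv : u + v = r * d) :
    (X 0 ^ u * X 1 ^ v : MvPolynomial (Fin 2) k) ∈ Algebra.adjoin k (wrcGens8 k d e) ↔ r ≤ u := by
  refine ⟨fun h => ?_, fun h => X_zero_pow_mul_X_one_pow_mem_adjoin_wrcGens8 hr h huv⟩
  have hexp := X_zero_pow_mul_X_one_pow_mem_restrictSupportSubalgebra_iff.mp
    (adjoin_wrcGens8_le_restrictSupportSubalgebra h)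
  simpa using le_of_mem_wrcExponents hd hre hexp (by simpa using huv)

lemma adjoin_wrcGens8_inf_homogeneousSubmodule {r : ℕ} (hd : 0 < d) (hr : 1 ≤ r) (hre : r < e) :
    Subalgebra.toSubmodule (Algebra.adjoin k (wrcGens8 k d e)) ⊓
        homogeneousSubmodule (Fin 2) k (r * d) =
      restrictSupport k ((fun u => single 0 u + single 1 (r * d - u)) '' Set.Icc r (r * d)) := by
  apply le_antisymm
  · calc _ ≤ restrictSupport k (wrcExponents d e : Set (Fin 2 →₀ ℕ)) ⊓
          restrictSupport k {m | m.degree = r * d} := by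
          rw [homogeneousSubmodule_eq_finsupp_supported]
          exact inf_le_inf_right _ adjoin_wrcGens8_le_restrictSupportSubalgebra
      _ = restrictSupport k (wrcExponents d e ∩ {m | m.degree = r * d}) := by
          ext p
          simp only [Submodule.mem_inf, mem_restrictSupport_iff, Set.subset_inter_iff]
      _ ≤ _ := by
          refine restrictSupport_mono _ fun m ⟨hm, (hdeg : m.degree = r * d)⟩ => ?_
          have hm0 := le_of_mem_wrcExponents hd hre hm hdeg
          rw [degree_fin_two] at hdeg
          refine ⟨m 0, ⟨hm0, by omega⟩, ?_⟩
          ext i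
          fin_cases i
          · simp
          · simp only [Fin.mk_one, Finsupp.add_apply, single_eq_same,
              single_eq_of_ne (one_ne_zero' (Fin 2)), zero_add]
            omega
  · rw [restrictSupport_eq_span, Submodule.span_le, Set.image_image]
    rintro _ ⟨u, hu, rfl⟩
    refine ⟨?_, isHomogeneous_monomial _ ?_⟩
    · dsimp only
      rw [SetLike.mem_coe, Subalgebra.mem_toSubmodule, monomial_single_zero_add_single_one,
        X_zero_pow_mul_X_one_pow_mem_adjoin_wrcGens8_iff hd hr hre (Nat.add_sub_cancel' hu.2)]
      exact hu.1
    · rw [degree_single_zero_add_single_one]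
      exact Nat.add_sub_cancel' hu.2

end Field

theorem stmt8_general (k : Type*) [Field k] (d e : ℕ) (hd : 1 ≤ d)
    (R : Subalgebra k (MvPolynomial (Fin 2) k))
    (hR : R = Algebra.adjoin k (wrcGens8 k d e))
    (r : ℕ) (hr1 : 1 ≤ r) (hr2 : r ≤ e - 1) :
    (∀ u : ℕ, u ≤ r * d →
      ((X 0 : MvPolynomial (Fin 2) k) ^ u * X 1 ^ (r * d - u) ∈ R ↔ r ≤ u)) ∧
    Module.finrank k
      ↥(Subalgebra.toSubmodule R ⊓ homogeneousSubmodule (Fin 2) k (r * d)) =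
      r * d + 1 - r := by
  have hre : r < e := by omega
  subst hR
  refine ⟨fun u hu => X_zero_pow_mul_X_one_pow_mem_adjoin_wrcGens8_iff hd hr1 hre (by omega), ?_⟩
  have hinj : Function.Injective fun u => (single 0 u + single 1 (r * d - u) : Fin 2 →₀ ℕ) :=
    fun u v huv => by simpa using DFunLike.congr_fun huv 0
  rw [adjoin_wrcGens8_inf_homogeneousSubmodule hd hr1 hre, finrank_restrictSupport,
    Set.ncard_image_of_injective _ hinj, Set.ncard_Icc_nat]

/-- For `1 ≤ r ≤ e−1`, the monomial `s^u t^{rd−u}` (with `u ≤ rd`) lies in `R` iff `r ≤ u`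
(so exactly the `r` monomials `t^{rd}, …, s^{r−1}t^{rd−r+1}` are missing), and the
degree-`r` graded component of `R` has dimension `rd + 1 − r`. -/
theorem stmt8 (k : Type*) [Field k] (d e : ℕ) (hd : 1 ≤ d) (he : 2 ≤ e)
    (R : Subalgebra k (MvPolynomial (Fin 2) k))
    (hR : R = Algebra.adjoin k (wrcGens8 k d e))
    (r : ℕ) (hr1 : 1 ≤ r) (hr2 : r ≤ e - 1) :
    (∀ u : ℕ, u ≤ r * d →
      ((X 0 : MvPolynomial (Fin 2) k) ^ u * X 1 ^ (r * d - u) ∈ R ↔ r ≤ u)) ∧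
    Module.finrank k
      ↥(Subalgebra.toSubmodule R ⊓ homogeneousSubmodule (Fin 2) k (r * d)) =
      r * d + 1 - r :=
  stmt8_general k d e hd R hR r hr1 hr2
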